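/- Let m, j be integers with m ≥ 4 and 1 ≤ j < m/2. If 6 divides m and 3 does not divide j, then the generalized Pappus graph P(m, j, m/2) admits a neighborhood 3-balanced coloring; in fact ℓ(v_i) = ℓ(u_i) = ℓ(w_i) = i mod 3 is such a coloring. -/

import Mathlib

/-- A coloring `ℓ : V → ZMod 3` of a simple graph `G` is neighborhood 3-balanced if
every vertex has an equal number of neighbors of each of the three colors. -/
def NBalanced {V : Type*} (G : SimpleGraph V) (ℓ : V → ZMod 3) : Prop :=
  ∀ v : V, ∀ i j : ZMod 3,
    {w | G.Adj v w ∧ ℓ w = i}.ncard = {w | G.Adj v w ∧ ℓ w = j}.ncard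

/-- The generalized Pappus graph `P(m, j, k)`.  Vertices: `Sum.inl x` are the exterior
vertices `v_x`, `Sum.inr (Sum.inl x)` the middle vertices `u_x`, and
`Sum.inr (Sum.inr x)` the interior vertices `w_x`, for `x : ZMod m`.
Edges: `v_i v_{i+1}`, `v_i u_i`, `u_i w_{i+j}`, `u_i w_{i-j}`, and `w_i w_{i+k}`. -/
def genPappus (m j k : ℕ) : SimpleGraph (ZMod m ⊕ ZMod m ⊕ ZMod m) :=
  SimpleGraph.fromRel (fun a b =>
    match a, b with
    | Sum.inl x, Sum.inl y => y = x + 1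
    | Sum.inl x, Sum.inr (Sum.inl y) => y = x
    | Sum.inr (Sum.inl x), Sum.inr (Sum.inr y) =>
        y = x + (j : ZMod m) ∨ y = x - (j : ZMod m)
    | Sum.inr (Sum.inr x), Sum.inr (Sum.inr y) => y = x + (k : ZMod m)
    | _, _ => False)

/-! Every vertex has exactly three neighbours; for `w_x` this is because `k = m / 2` gives
`-k = k`. Colour the spoke `{v_x, u_x, w_x}` by `f x` for an additive `f : ZMod m → ZMod 3`.
The neighbours of `v_x`, `u_x`, `w_x` then receive the colours `f x + e, f x - e, f x` with
`e = f 1, f j, f j` respectively (for `w_x` using `f k = 0`), and in `ZMod 3` these are the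
three distinct colours as soon as `e ≠ 0`. -/

open Set

theorem NBalanced.of_bijOn {V : Type*} {G : SimpleGraph V} {ℓ : V → ZMod 3}
    (h : ∀ v, BijOn ℓ (G.neighborSet v) univ) : NBalanced G ℓ := by
  have hfiber : ∀ v i, {w | G.Adj v w ∧ ℓ w = i}.ncard = 1 := by
    intro v i
    obtain ⟨w, hw, rfl⟩ := (h v).surjOn (mem_univ i)
    refine ncard_eq_one.2 ⟨w, ext fun w' => ⟨fun ⟨hw', he⟩ => (h v).injOn hw' hw he, ?_⟩⟩
    rintro rfl
    exact ⟨hw, rfl⟩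
  intro v i i'
  rw [hfiber, hfiber]

lemma bijOn_univ_of_add_of_sub {V : Type*} {ℓ : V → ZMod 3} {a b c : V} {e : ZMod 3}
    (he : e ≠ 0) (ha : ℓ a = ℓ c + e) (hb : ℓ b = ℓ c - e) : BijOn ℓ {a, b, c} univ := by
  have key : ∀ p d i : ZMod 3, d ≠ 0 → (p + d ≠ p - d ∧ p + d ≠ p ∧ p - d ≠ p) ∧
      (i = p + d ∨ i = p - d ∨ i = p) := by
    decide
  obtain ⟨⟨hab, hac, hbc⟩, -⟩ := key (ℓ c) e 0 he
  rw [← ha, ← hb] at hab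
  rw [← ha] at hac
  rw [← hb] at hbc
  refine ⟨mapsTo_univ _ _, ?_, fun i _ => ?_⟩
  · rintro x (rfl | rfl | rfl) y (rfl | rfl | rfl) hxy <;>
      first | rfl | exact absurd hxy ‹_› | exact absurd hxy.symm ‹_›
  · rcases (key (ℓ c) e i he).2 with rfl | rfl | rfl
    · exact ⟨a, by simp, ha⟩
    · exact ⟨b, by simp, hb⟩
    · exact ⟨c, by simp, rfl⟩

namespace genPappus

variable {m : ℕ} (j k : ℕ)

lemma neighborSet_inl (h1 : (1 : ZMod m) ≠ 0) (x : ZMod m) :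
    (genPappus m j k).neighborSet (.inl x) = {.inl (x + 1), .inl (x - 1), .inr (.inl x)} := by
  ext (y | y | y) <;>
    simp only [genPappus, SimpleGraph.mem_neighborSet, SimpleGraph.fromRel_adj, ne_eq,
      Sum.inl.injEq, Sum.inr.injEq, reduceCtorEq, mem_insert_iff, mem_singleton_iff,
      not_false_eq_true, true_and, and_false, or_false, false_or, or_self]
  constructor
  · rintro ⟨-, rfl | rfl⟩
    · exact .inl rfl
    · exact .inr (add_sub_cancel_right y 1).symm
  · rintro (rfl | rfl)
    · exact ⟨fun h => h1 (by simpa using h.symm), .inl rfl⟩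
    · exact ⟨fun h => h1 (by simpa using h.symm), .inr (sub_add_cancel x 1).symm⟩

lemma neighborSet_inr_inl (x : ZMod m) :
    (genPappus m j k).neighborSet (.inr (.inl x)) =
      {.inr (.inr (x + j)), .inr (.inr (x - j)), .inl x} := by
  ext (y | y | y) <;> simp [genPappus, eq_comm]

lemma neighborSet_inr_inr (hk : (k : ZMod m) ≠ 0) (hneg : -(k : ZMod m) = k) (x : ZMod m) :
    (genPappus m j k).neighborSet (.inr (.inr x)) =
      {.inr (.inl (x + j)), .inr (.inl (x - j)), .inr (.inr (x + k))} := by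
  ext (y | y | y) <;>
    simp only [genPappus, SimpleGraph.mem_neighborSet, SimpleGraph.fromRel_adj, ne_eq,
      Sum.inl.injEq, Sum.inr.injEq, reduceCtorEq, mem_insert_iff, mem_singleton_iff,
      not_false_eq_true, true_and, and_false, or_false, false_or, or_self]
  · constructor <;> rintro (rfl | rfl) <;> simp
  · constructor
    · rintro ⟨-, rfl | rfl⟩
      · rfl
      · rw [add_assoc, neg_eq_iff_add_eq_zero.1 hneg, add_zero]
    · rintro rfl
      exact ⟨fun h => hk (by simpa using h.symm), .inl rfl⟩

def indexColoring (f : ZMod m → ZMod 3) : ZMod m ⊕ ZMod m ⊕ ZMod m → ZMod 3 :=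
  Sum.elim f (Sum.elim f f)

theorem nBalanced_indexColoring (f : ZMod m →+ ZMod 3) (h1 : f 1 ≠ 0) (hj : f j ≠ 0)
    (hk : f k = 0) (hk0 : (k : ZMod m) ≠ 0) (hneg : -(k : ZMod m) = k) :
    NBalanced (genPappus m j k) (indexColoring f) := by
  have h1' : (1 : ZMod m) ≠ 0 := fun h => h1 (by rw [h, map_zero])
  refine NBalanced.of_bijOn fun v => ?_
  rcases v with x | x | x
  · rw [neighborSet_inl j k h1']
    exact bijOn_univ_of_add_of_sub h1 (map_add f x 1) (map_sub f x 1)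
  · rw [neighborSet_inr_inl j k]
    exact bijOn_univ_of_add_of_sub hj (map_add f x j) (map_sub f x j)
  · rw [neighborSet_inr_inr j k hk0 hneg]
    refine bijOn_univ_of_add_of_sub hj ?_ ?_ <;>
      simp [indexColoring, hk]

end genPappus

open genPappus in
theorem stmt9 (m j : ℕ) (hm : 4 ≤ m)
    (h6m : 6 ∣ m) (h3j : ¬ 3 ∣ j) :
    (∃ ℓ, NBalanced (genPappus m j (m / 2)) ℓ) ∧
      NBalanced (genPappus m j (m / 2))
        (fun a => match a with
          | Sum.inl x => (x.val : ZMod 3)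
          | Sum.inr (Sum.inl x) => (x.val : ZMod 3)
          | Sum.inr (Sum.inr x) => (x.val : ZMod 3)) := by
  have : NeZero m := ⟨by omega⟩
  have h3m : 3 ∣ m := (Nat.dvd_mul_left 3 2).trans h6m
  let f : ZMod m →+ ZMod 3 := (ZMod.castHom h3m (ZMod 3)).toAddMonoidHom
  have hhalf : (((m / 2 : ℕ) : ZMod m)).val = m / 2 := ZMod.val_natCast_of_lt (by omega)
  have hbal : NBalanced (genPappus m j (m / 2)) (indexColoring f) := by
    refine nBalanced_indexColoring j (m / 2) f ?_ ?_ ?_ ?_ ?_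
    · simp [f, ZMod.cast_one h3m]
    · simpa [f, ZMod.natCast_eq_zero_iff] using h3j
    · obtain ⟨t, rfl⟩ := h6m
      simpa [f, ZMod.natCast_eq_zero_iff] using ⟨t, by omega⟩
    · intro h
      rw [h, ZMod.val_zero] at hhalf
      omega
    · exact (ZMod.neg_eq_self_iff _).2 (.inr (by omega))
  have hcol : indexColoring f = fun a => match a with
      | Sum.inl x => (x.val : ZMod 3)
      | Sum.inr (Sum.inl x) => (x.val : ZMod 3)
      | Sum.inr (Sum.inr x) => (x.val : ZMod 3) := by
    funext x
    rcases x with x | x | x <;> simp [indexColoring, f, ZMod.natCast_val]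
  exact ⟨⟨_, hbal⟩, hcol ▸ hbal⟩
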